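/- arXiv:1403.1182 — 2 statements merged into one kernel-verified Lean document; each statement's English description precedes it below -/
import Mathlib

section
/- Let n ≥ 1 and k ≥ 1 be integers and a_1, …, a_{3n} positive integers with k/4 < a_i < k/2 for each i and a_1 + ⋯ + a_{3n} = nk, and let G_{A,k} be the graph constructed as follows: take 3n pairwise disjoint copies K^(1), …, K^(3n) of the complete bipartite graph K_{2k,2k−1}, and in K^(i) let X^(i) denote the part of size 2k; add three new vertices u, v, w; for each i, partition X^(i) into three sets of sizes 2a_i, k − a_i, and k − a_i, joining them to u, v, w respectively. Then reg(G_{A,k}) ≥ n. -/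
/-!
The vertex `u` has `∑ 2aᵢ = 2nk` neighbours, all in the sides `X⁽ⁱ⁾`, and each vertex of
`X⁽ⁱ⁾` has degree `(2k - 1) + 1 = 2k`. A regular part containing an edge `ux` has common
degree equal to the degree of `x` in that part, so it covers at most `2k` of the edges at `u`;
hence at least `2nk / 2k = n` parts are needed.
-/

open SimpleGraph

variable {V : Type*}

/-- The number of edges of the edge set `F` incident with the vertex `v`. -/
noncomputable def edgeDeg (F : Set (Sym2 V)) (v : V) : ℕ := {e ∈ F | v ∈ e}.ncard

/-- The subgraph induced by the edge set `F` (on the vertices incident with edges of `F`)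
is `r`-regular: every vertex incident with an edge of `F` lies on exactly `r` edges of `F`. -/
def IsRegularEdgeSet (F : Set (Sym2 V)) (r : ℕ) : Prop :=
  ∀ v : V, (∃ e ∈ F, v ∈ e) → edgeDeg F v = r

/-- `P` is a partition of the edge set of `G` into `t` nonempty parts, each of which
induces a regular subgraph. -/
def IsRegularPartition (G : SimpleGraph V) {t : ℕ} (P : Fin t → Set (Sym2 V)) : Prop :=
  (∀ i, (P i).Nonempty) ∧ (∀ i j, i ≠ j → Disjoint (P i) (P j)) ∧
    (⋃ i, P i) = G.edgeSet ∧ ∀ i, ∃ r, IsRegularEdgeSet (P i) r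

/-- The regular number of `G`: the minimum number of parts in a partition of the edge set of `G`
into nonempty subsets each of which induces a regular subgraph. -/
noncomputable def regNum (G : SimpleGraph V) : ℕ :=
  sInf {t | ∃ P : Fin t → Set (Sym2 V), IsRegularPartition G P}

/-- `C` is a proper edge coloring of `G` with `n` colors: edges sharing a vertex get
distinct colors. -/
def IsProperEdgeColoring (G : SimpleGraph V) {n : ℕ} (C : Sym2 V → Fin n) : Prop :=
  ∀ e₁ ∈ G.edgeSet, ∀ e₂ ∈ G.edgeSet, e₁ ≠ e₂ → (∃ x, x ∈ e₁ ∧ x ∈ e₂) → C e₁ ≠ C e₂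

/-- The edge chromatic number of `G`: the minimum number of colors of a proper edge coloring. -/
noncomputable def edgeChromNum (G : SimpleGraph V) : ℕ :=
  sInf {n | ∃ C : Sym2 V → Fin n, IsProperEdgeColoring G C}

/-- The graph `G_{A,k}`: `3n` disjoint copies of the complete bipartite graph `K_{2k,2k-1}`
(copy `i` has parts `Fin (2k)` and `Fin (2k-1)`), together with three extra vertices
`u = 2`... namely `Sum.inr 0 = u`, `Sum.inr 1 = v`, `Sum.inr 2 = w`; the vertex `x` of the
part `X⁽ⁱ⁾ = Fin (2k)` of copy `i` is joined to the extra vertex `σ i x`. -/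
def gadgetGraph (n k : ℕ) (σ : Fin (3 * n) → Fin (2 * k) → Fin 3) :
    SimpleGraph ((Fin (3 * n) × (Fin (2 * k) ⊕ Fin (2 * k - 1))) ⊕ Fin 3) :=
  SimpleGraph.fromRel (fun p q =>
    match p, q with
    | Sum.inl (i, Sum.inl _), Sum.inl (j, Sum.inr _) => i = j
    | Sum.inl (i, Sum.inl x), Sum.inr c => σ i x = c
    | _, _ => False)

lemma edgeDeg_mono [Finite V] {F F' : Set (Sym2 V)} (h : F ⊆ F') (v : V) :
    edgeDeg F v ≤ edgeDeg F' v :=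
  Set.ncard_le_ncard (fun _ he => ⟨h he.1, he.2⟩)

lemma edgeDeg_iUnion_le {t : ℕ} (F : Fin t → Set (Sym2 V)) (v : V) :
    edgeDeg (⋃ i, F i) v ≤ ∑ i, edgeDeg (F i) v := by
  have hsplit : {e ∈ ⋃ i, F i | v ∈ e} = ⋃ i, {e ∈ F i | v ∈ e} := by
    ext e
    simp
  rw [edgeDeg, hsplit]
  exact Set.ncard_iUnion_le_of_fintype _

lemma edgeDeg_edgeSet (G : SimpleGraph V) (v : V) :
    edgeDeg G.edgeSet v = (G.neighborSet v).ncard := by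
  classical
  exact Set.ncard_congr' (G.incidenceSetEquivNeighborSet v)

lemma IsRegularEdgeSet.edgeDeg_le [Finite V] {G : SimpleGraph V} {F : Set (Sym2 V)} {r : ℕ}
    (hF : IsRegularEdgeSet F r) (hFG : F ⊆ G.edgeSet) {v : V} {d : ℕ}
    (hd : ∀ w, G.Adj v w → edgeDeg G.edgeSet w ≤ d) : edgeDeg F v ≤ d := by
  by_cases hv : ∃ e ∈ F, v ∈ e
  · obtain ⟨e, heF, hve⟩ := hv
    obtain ⟨w, rfl⟩ := Sym2.mem_iff_exists.mp hve
    calc edgeDeg F v = edgeDeg F w := by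
          rw [hF v ⟨_, heF, hve⟩, hF w ⟨_, heF, Sym2.mem_mk_right v w⟩]
      _ ≤ edgeDeg G.edgeSet w := edgeDeg_mono hFG w
      _ ≤ d := hd w (hFG heF)
  · have hempty : {e ∈ F | v ∈ e} = ∅ := by
      ext e
      simpa using fun he hve => hv ⟨e, he, hve⟩
    simp [edgeDeg, hempty]

lemma IsRegularPartition.edgeDeg_le_mul [Finite V] {G : SimpleGraph V} {t : ℕ}
    {P : Fin t → Set (Sym2 V)} (hP : IsRegularPartition G P) {v : V} {d : ℕ}
    (hd : ∀ w, G.Adj v w → edgeDeg G.edgeSet w ≤ d) : edgeDeg G.edgeSet v ≤ t * d := by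
  obtain ⟨-, -, hunion, hreg⟩ := hP
  calc edgeDeg G.edgeSet v ≤ ∑ i, edgeDeg (P i) v := hunion ▸ edgeDeg_iUnion_le P v
    _ ≤ ∑ _i : Fin t, d := by
        refine Finset.sum_le_sum fun i _ => ?_
        obtain ⟨r, hr⟩ := hreg i
        exact hr.edgeDeg_le (hunion ▸ Set.subset_iUnion P i) hd
    _ = t * d := by simp

lemma exists_isRegularPartition [Finite V] (G : SimpleGraph V) :
    ∃ t, ∃ P : Fin t → Set (Sym2 V), IsRegularPartition G P := by
  let E := Finite.equivFin G.edgeSet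
  refine ⟨_, fun j => {(E.symm j : Sym2 V)}, fun j => Set.singleton_nonempty _, ?_, ?_, ?_⟩
  · intro i j hij
    rw [Set.disjoint_singleton]
    exact fun h => hij (E.symm.injective (Subtype.ext h))
  · ext e
    simp only [Set.mem_iUnion, Set.mem_singleton_iff]
    exact ⟨by rintro ⟨j, rfl⟩; exact (E.symm j).2,
      fun he => ⟨E ⟨e, he⟩, by rw [Equiv.symm_apply_apply]⟩⟩
  · intro j
    refine ⟨1, fun v ⟨e, he, hve⟩ => ?_⟩
    rw [Set.mem_singleton_iff] at he
    subst he
    have hsingle :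
        {e' ∈ ({(E.symm j : Sym2 V)} : Set (Sym2 V)) | v ∈ e'} = {(E.symm j : Sym2 V)} :=
      Set.sep_eq_self_iff_mem_true.mpr fun e' he' => (Set.mem_singleton_iff.mp he') ▸ hve
    rw [edgeDeg, hsingle, Set.ncard_singleton]

theorem le_regNum_of_edgeDeg [Finite V] {G : SimpleGraph V} {v : V} {n d : ℕ} (hd_pos : 0 < d)
    (hv : n * d ≤ edgeDeg G.edgeSet v) (hd : ∀ w, G.Adj v w → edgeDeg G.edgeSet w ≤ d) :
    n ≤ regNum G :=
  le_csInf (exists_isRegularPartition G) fun _ ⟨_, hP⟩ =>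
    Nat.le_of_mul_le_mul_right (hv.trans (hP.edgeDeg_le_mul hd)) hd_pos

section Gadget

variable {n k : ℕ} {σ : Fin (3 * n) → Fin (2 * k) → Fin 3}

lemma gadgetGraph_adj_inr {c : Fin 3}
    {p : (Fin (3 * n) × (Fin (2 * k) ⊕ Fin (2 * k - 1))) ⊕ Fin 3} :
    (gadgetGraph n k σ).Adj (Sum.inr c) p ↔ ∃ i x, σ i x = c ∧ p = Sum.inl (i, Sum.inl x) := by
  rcases p with ⟨i, x | y⟩ | c' <;> simp [gadgetGraph]

lemma gadgetGraph_neighborSet_inl_inl (i : Fin (3 * n)) (x : Fin (2 * k)) :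
    (gadgetGraph n k σ).neighborSet (Sum.inl (i, Sum.inl x)) =
      Set.range (fun y => Sum.inl (i, Sum.inr y)) ∪ {Sum.inr (σ i x)} := by
  ext q
  rcases q with ⟨j, x' | y⟩ | c <;> simp [gadgetGraph, eq_comm]

lemma edgeDeg_gadgetGraph_inr (c : Fin 3) :
    edgeDeg (gadgetGraph n k σ).edgeSet (Sum.inr c) =
      ∑ i, (Finset.univ.filter fun x => σ i x = c).card := by
  have hnbhd : (gadgetGraph n k σ).neighborSet (Sum.inr c) =
      (fun q : Fin (3 * n) × Fin (2 * k) => Sum.inl (q.1, Sum.inl q.2)) ''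
        {q | σ q.1 q.2 = c} := by
    ext p
    simp [gadgetGraph_adj_inr, eq_comm]
  have hinj : Function.Injective (fun q : Fin (3 * n) × Fin (2 * k) =>
      (Sum.inl (q.1, Sum.inl q.2) : (Fin (3 * n) × (Fin (2 * k) ⊕ Fin (2 * k - 1))) ⊕ Fin 3)) := by
    rintro ⟨i, x⟩ ⟨i', x'⟩ h
    simpa using h
  rw [edgeDeg_edgeSet, hnbhd, Set.ncard_image_of_injective _ hinj, Set.ncard_eq_toFinset_card',
    Set.toFinset_ofPred, Finset.card_filter, ← Finset.univ_product_univ, Finset.sum_product]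
  simp only [Finset.card_filter]

lemma edgeDeg_gadgetGraph_inl_inl_le (i : Fin (3 * n)) (x : Fin (2 * k)) :
    edgeDeg (gadgetGraph n k σ).edgeSet (Sum.inl (i, Sum.inl x)) ≤ 2 * k := by
  rw [edgeDeg_edgeSet, gadgetGraph_neighborSet_inl_inl]
  calc _ ≤ (Set.range fun y : Fin (2 * k - 1) => _).ncard + ({_} : Set _).ncard :=
        Set.ncard_union_le _ _
    _ ≤ (2 * k - 1) + 1 := by
        gcongr
        · exact (Set.ncard_range_of_injective fun y y' h => by simpa using h).trans_le (by simp)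
        · simp
    _ = 2 * k := by have := x.pos; omega

end Gadget

theorem regNum_gadget_ge_general (n k : ℕ) (hk : 1 ≤ k)
    (a : Fin (3 * n) → ℕ)
    (hsum : ∑ i, a i = n * k)
    (σ : Fin (3 * n) → Fin (2 * k) → Fin 3)
    (hσ0 : ∀ i, (Finset.univ.filter fun x => σ i x = 0).card = 2 * a i) :
    n ≤ regNum (gadgetGraph n k σ) := by
  refine le_regNum_of_edgeDeg (v := Sum.inr 0) (d := 2 * k) (by omega) ?_ ?_
  · rw [edgeDeg_gadgetGraph_inr, Finset.sum_congr rfl fun i _ => hσ0 i, ← Finset.mul_sum, hsum]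
    exact le_of_eq (by ring)
  · intro w hw
    obtain ⟨i, x, -, rfl⟩ := gadgetGraph_adj_inr.mp hw
    exact edgeDeg_gadgetGraph_inl_inl_le i x

/-- the graph `G_{A,k}` always has regular number at least `n`. -/
theorem regNum_gadget_ge (n k : ℕ) (hn : 1 ≤ n) (hk : 1 ≤ k)
    (a : Fin (3 * n) → ℕ)
    (ha : ∀ i, k < 4 * a i ∧ 2 * a i < k)
    (hsum : ∑ i, a i = n * k)
    (σ : Fin (3 * n) → Fin (2 * k) → Fin 3)
    (hσ0 : ∀ i, (Finset.univ.filter fun x => σ i x = 0).card = 2 * a i)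
    (hσ1 : ∀ i, (Finset.univ.filter fun x => σ i x = 1).card = k - a i)
    (hσ2 : ∀ i, (Finset.univ.filter fun x => σ i x = 2).card = k - a i) :
    n ≤ regNum (gadgetGraph n k σ) :=
  regNum_gadget_ge_general n k hk a hsum σ hσ0
end

section
/- There exists a finite connected simple graph G with at least one edge such that reg(G) = Δ(G) + 1; in particular, the bound reg(G) ≤ Δ(G) does not hold for all connected graphs. -/
open SimpleGraph

variable {V : Type*}

/-!
Take a hub `0` with two pendant leaves `1`, `2` and a third neighbour `3`, where `3` subdivides
the edge `67` of a `K₄` on `{4, 5, 6, 7}`; every vertex has degree at most `3`. A regular part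
containing an edge at the hub is a matching: a leaf edge in it forces degree `1`, and otherwise
the hub lies on a single edge of the part. Hence the three hub edges lie in three different
matchings, and with only three parts every part would be a matching. But the seven edges on the
five vertices `3, …, 7` cannot be covered by three matchings, each containing at most two of
them. Four matchings do cover the graph.
-/

section EdgeDeg

variable {V : Type*} {F : Set (Sym2 V)} {r : ℕ} {e f : Sym2 V} {v : V}

lemma one_le_edgeDeg [Finite V] (he : e ∈ F) (hv : v ∈ e) : 1 ≤ edgeDeg F v :=
  (Set.ncard_pos (Set.toFinite _)).mpr ⟨e, he, hv⟩

lemma two_le_edgeDeg [Finite V] (he : e ∈ F) (hf : f ∈ F) (hef : e ≠ f) (hve : v ∈ e)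
    (hvf : v ∈ f) : 2 ≤ edgeDeg F v := by
  rw [← Set.ncard_pair hef]
  exact Set.ncard_le_ncard (Set.pair_subset ⟨he, hve⟩ ⟨hf, hvf⟩) (Set.toFinite _)

lemma edgeDeg_le_degree (G : SimpleGraph V) [Fintype (G.neighborSet v)] (hF : F ⊆ G.edgeSet) :
    edgeDeg F v ≤ G.degree v := by
  classical
  rw [← card_incidenceSet_eq_degree, ← Nat.card_eq_fintype_card, Nat.card_coe_set_eq]
  exact Set.ncard_le_ncard (fun e he ↦ ⟨hF he.1, he.2⟩) (Set.toFinite _)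

lemma IsRegularEdgeSet.eq_one_of_degree_eq_one [Finite V] {G : SimpleGraph V}
    [Fintype (G.neighborSet v)] (hreg : IsRegularEdgeSet F r) (hF : F ⊆ G.edgeSet)
    (hv : G.degree v = 1) (he : e ∈ F) (hve : v ∈ e) : r = 1 := by
  have := one_le_edgeDeg he hve
  have := edgeDeg_le_degree G (v := v) hF
  have := hreg v ⟨e, he, hve⟩
  omega

lemma IsRegularEdgeSet.eq_of_mem_of_mem [Finite V] (hF : IsRegularEdgeSet F 1) (he : e ∈ F)
    (hf : f ∈ F) (hve : v ∈ e) (hvf : v ∈ f) : e = f := by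
  by_contra hef
  have := two_le_edgeDeg he hf hef hve hvf
  have := hF v ⟨e, he, hve⟩
  omega

lemma isRegularEdgeSet_one_of_eq_of_mem_of_mem
    (h : ∀ e ∈ F, ∀ f ∈ F, ∀ v, v ∈ e → v ∈ f → e = f) : IsRegularEdgeSet F 1 := by
  rintro v ⟨e, he, hve⟩
  rw [edgeDeg, ← Set.ncard_singleton e]
  congr 1
  ext f
  exact ⟨fun ⟨hf, hvf⟩ ↦ h f hf e he v hvf hve, fun hf ↦ hf ▸ ⟨he, hve⟩⟩

lemma IsRegularEdgeSet.ncard_le_card_div_two [Finite V]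
    (hF : IsRegularEdgeSet F 1) {M : Set (Sym2 V)} (hM : M ⊆ F) (S : Finset V)
    (hS : ∀ e ∈ M, ¬e.IsDiag ∧ ∀ v ∈ e, v ∈ S) : M.ncard ≤ S.card / 2 := by
  classical
  rw [Nat.le_div_iff_mul_le two_pos, Set.ncard_eq_toFinset_card M (Set.toFinite _),
    ← mul_one S.card]
  refine Finset.card_mul_le_card_mul (fun e v ↦ v ∈ e) (fun e he ↦ ?_) (fun v _ ↦ ?_)
  · obtain ⟨hdiag, hS⟩ := hS e ((Set.Finite.mem_toFinset _).mp he)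
    induction e using Sym2.inductionOn with
    | hf a b =>
      have hab : a ≠ b := fun h ↦ hdiag (Sym2.mk_isDiag_iff.mpr h)
      rw [← Finset.card_pair hab]
      refine Finset.card_le_card fun x hx ↦ ?_
      rw [Finset.mem_bipartiteAbove]
      rcases Finset.mem_insert.mp hx with rfl | hx
      · exact ⟨hS _ (Sym2.mem_mk_left _ _), Sym2.mem_mk_left _ _⟩
      · rw [Finset.mem_singleton.mp hx]
        exact ⟨hS _ (Sym2.mem_mk_right _ _), Sym2.mem_mk_right _ _⟩
  · refine Finset.card_le_one.mpr fun e he f hf ↦ ?_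
    simp only [Finset.mem_bipartiteBelow, Set.Finite.mem_toFinset] at he hf
    exact hF.eq_of_mem_of_mem (hM he.1) (hM hf.1) he.2 hf.2

end EdgeDeg

section RegularPartition

variable {V : Type*} {G : SimpleGraph V} {t : ℕ} {P : Fin t → Set (Sym2 V)}

lemma IsRegularPartition.subset_edgeSet (hP : IsRegularPartition G P) (i : Fin t) :
    P i ⊆ G.edgeSet :=
  hP.2.2.1 ▸ Set.subset_iUnion P i

lemma IsRegularPartition.exists_mem (hP : IsRegularPartition G P) {e : Sym2 V}
    (he : e ∈ G.edgeSet) : ∃ i, e ∈ P i :=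
  Set.mem_iUnion.mp (hP.2.2.1 ▸ he)

lemma regNum_eq_of_forall_le (hP : IsRegularPartition G P)
    (h : ∀ (s : ℕ) (Q : Fin s → Set (Sym2 V)), IsRegularPartition G Q → t ≤ s) :
    regNum G = t :=
  le_antisymm (Nat.sInf_le ⟨P, hP⟩) (le_csInf ⟨t, P, hP⟩ fun s ⟨Q, hQ⟩ ↦ h s Q hQ)

lemma IsRegularPartition.ncard_le_mul [Finite V] (hP : IsRegularPartition G P)
    (hmatch : ∀ i, IsRegularEdgeSet (P i) 1) {A : Set (Sym2 V)} (hA : A ⊆ G.edgeSet)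
    (S : Finset V) (hS : ∀ e ∈ A, ∀ v ∈ e, v ∈ S) : A.ncard ≤ t * (S.card / 2) := by
  have hcover : A = ⋃ i, P i ∩ A := by
    rw [← Set.iUnion_inter, hP.2.2.1, Set.inter_eq_right.mpr hA]
  calc A.ncard
      = (⋃ i, P i ∩ A).ncard := congrArg Set.ncard hcover
    _ ≤ ∑ i, (P i ∩ A).ncard := Set.ncard_iUnion_le_of_fintype _
    _ ≤ ∑ _i : Fin t, S.card / 2 := Finset.sum_le_sum fun i _ ↦
        (hmatch i).ncard_le_card_div_two Set.inter_subset_left S fun e he ↦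
          ⟨G.not_isDiag_of_mem_edgeSet (hA he.2), hS e he.2⟩
    _ = t * (S.card / 2) := by simp

end RegularPartition

namespace Counterexample

def gadget : Finset (Sym2 (Fin 8)) :=
  {s(3,6), s(3,7), s(4,5), s(4,6), s(4,7), s(5,6), s(5,7)}

def graph : SimpleGraph (Fin 8) :=
  fromEdgeSet ↑({s(0,1), s(0,2), s(0,3)} ∪ gadget)

instance : DecidableRel graph.Adj :=
  inferInstanceAs (DecidableRel (fromEdgeSet _).Adj)

lemma maxDegree_graph : graph.maxDegree = 3 := by decide

lemma connected_graph : graph.Connected := by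
  have hdist : ∀ w, graph.Adj 3 w ∨ ∃ u, graph.Adj 3 u ∧ graph.Adj u w := by decide
  refine (connected_iff_exists_forall_reachable _).mpr ⟨3, fun w ↦ ?_⟩
  rcases hdist w with h | ⟨u, hu, huw⟩
  exacts [h.reachable, hu.reachable.trans huw.reachable]

lemma gadget_subset_edgeSet : (gadget : Set (Sym2 (Fin 8))) ⊆ graph.edgeSet := by
  intro e
  revert e
  decide

lemma eq_or_eq_or_eq_of_zero_mem : ∀ e ∈ graph.edgeSet, (0 : Fin 8) ∈ e →
    e = s(0,1) ∨ e = s(0,2) ∨ e = s(0,3) := by decide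

lemma eq_one_of_isRegularEdgeSet_of_mem_hub {F : Set (Sym2 (Fin 8))} {r : ℕ} {e : Sym2 (Fin 8)}
    (hreg : IsRegularEdgeSet F r) (hF : F ⊆ graph.edgeSet) (he : e ∈ F) (h0 : 0 ∈ e) :
    r = 1 := by
  by_cases h₁ : s(0,1) ∈ F
  · exact hreg.eq_one_of_degree_eq_one hF (by decide) h₁ (Sym2.mem_mk_right 0 1)
  by_cases h₂ : s(0,2) ∈ F
  · exact hreg.eq_one_of_degree_eq_one hF (by decide) h₂ (Sym2.mem_mk_right 0 2)
  have hle : edgeDeg F 0 ≤ 1 := by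
    rw [edgeDeg, ← Set.ncard_singleton (s(0,3) : Sym2 (Fin 8))]
    refine Set.ncard_le_ncard ?_ (Set.finite_singleton _)
    rintro f ⟨hf, h0f⟩
    rcases eq_or_eq_or_eq_of_zero_mem f (hF hf) h0f with rfl | rfl | rfl
    exacts [absurd hf h₁, absurd hf h₂, rfl]
  have := one_le_edgeDeg he h0
  have := hreg 0 ⟨e, he, h0⟩
  omega

def matchings : Fin 4 → Finset (Sym2 (Fin 8)) :=
  ![{s(0,1), s(3,6), s(4,7)}, {s(0,2), s(3,7), s(4,5)}, {s(0,3), s(4,6), s(5,7)}, {s(5,6)}]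

lemma isRegularPartition_matchings :
    IsRegularPartition graph fun i ↦ (matchings i : Set (Sym2 (Fin 8))) := by
  have hnonempty : ∀ i, (matchings i).Nonempty := by decide
  have hdisjoint : ∀ i j, i ≠ j → Disjoint (matchings i) (matchings j) := by decide
  have hcover : ∀ e, (∃ i, e ∈ matchings i) ↔ e ∈ graph.edgeSet := by decide
  have hmatching : ∀ i, ∀ e ∈ matchings i, ∀ f ∈ matchings i, ∀ v, v ∈ e → v ∈ f → e = f := by
    decide
  refine ⟨fun i ↦ Finset.coe_nonempty.mpr (hnonempty i),
    fun i j hij ↦ Finset.disjoint_coe.mpr (hdisjoint i j hij), ?_,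
    fun i ↦ ⟨1, isRegularEdgeSet_one_of_eq_of_mem_of_mem (hmatching i)⟩⟩
  ext e
  simpa only [Set.mem_iUnion, Finset.mem_coe] using hcover e

lemma four_le_of_isRegularPartition {t : ℕ} {P : Fin t → Set (Sym2 (Fin 8))}
    (hP : IsRegularPartition graph P) : 4 ≤ t := by
  have hmatch {i e} (hi : e ∈ P i) (h0 : 0 ∈ e) : IsRegularEdgeSet (P i) 1 := by
    obtain ⟨r, hr⟩ := hP.2.2.2 i
    rwa [← eq_one_of_isRegularEdgeSet_of_mem_hub hr (hP.subset_edgeSet i) hi h0]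
  obtain ⟨i₁, h₁⟩ := hP.exists_mem (by decide : s(0,1) ∈ graph.edgeSet)
  obtain ⟨i₂, h₂⟩ := hP.exists_mem (by decide : s(0,2) ∈ graph.edgeSet)
  obtain ⟨i₃, h₃⟩ := hP.exists_mem (by decide : s(0,3) ∈ graph.edgeSet)
  have hunique {i e f} (he : e ∈ P i) (hf : f ∈ P i) (h0e : 0 ∈ e) (h0f : 0 ∈ f) : e = f :=
    (hmatch he h0e).eq_of_mem_of_mem he hf h0e h0f
  have h₁₂ : i₁ ≠ i₂ := by
    rintro rfl; exact absurd (hunique h₁ h₂ (by decide) (by decide)) (by decide)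
  have h₁₃ : i₁ ≠ i₃ := by
    rintro rfl; exact absurd (hunique h₁ h₃ (by decide) (by decide)) (by decide)
  have h₂₃ : i₂ ≠ i₃ := by
    rintro rfl; exact absurd (hunique h₂ h₃ (by decide) (by decide)) (by decide)
  by_contra! ht
  have hcover (j : Fin t) : j = i₁ ∨ j = i₂ ∨ j = i₃ := by
    simp only [ne_eq, Fin.ext_iff] at h₁₂ h₁₃ h₂₃ ⊢
    omega
  have hall (j : Fin t) : IsRegularEdgeSet (P j) 1 := by
    rcases hcover j with rfl | rfl | rfl
    exacts [hmatch h₁ (by decide), hmatch h₂ (by decide), hmatch h₃ (by decide)]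
  have := hP.ncard_le_mul hall gadget_subset_edgeSet {3, 4, 5, 6, 7} (by decide)
  rw [Set.ncard_coe_finset, show gadget.card = 7 from rfl,
    show ({3, 4, 5, 6, 7} : Finset (Fin 8)).card = 5 from rfl] at this
  omega

lemma regNum_graph : regNum graph = 4 :=
  regNum_eq_of_forall_le isRegularPartition_matchings fun _ _ ↦ four_le_of_isRegularPartition

end Counterexample

/-- there is a finite connected simple graph `G` with at least one edge
such that `reg(G) = Δ(G) + 1`; in particular `reg(G) ≤ Δ(G)` fails for this graph. -/
theorem exists_connected_regNum_eq_maxDegree_add_one :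
    ∃ (W : Type) (_ : Fintype W) (G : SimpleGraph W) (_ : DecidableRel G.Adj),
      G.Connected ∧ G.edgeSet.Nonempty ∧
        regNum G = G.maxDegree + 1 ∧ ¬regNum G ≤ G.maxDegree := by
  have hreg := Counterexample.regNum_graph
  have hmax := Counterexample.maxDegree_graph
  exact ⟨Fin 8, inferInstance, Counterexample.graph, inferInstance,
    Counterexample.connected_graph, ⟨s(0,1), by decide⟩, by omega, by omega⟩
end
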